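/- Let A be an n×n real SPSD matrix, let Q ∈ ℝ^{n×ℓ}, and let 1 ≤ k < n. Then the minimum of ‖A − AQCQᵀA‖_F over all matrices C ∈ ℝ^{ℓ×ℓ} with rank(C) ≤ k is at most the minimum of ‖A − QC‖_F over all matrices C ∈ ℝ^{ℓ×n} with rank(C) ≤ k. In other words, a relative-error Frobenius-norm guarantee for the best one-sided rank-k projection onto the column space of Q implies the same guarantee for the best two-sided rank-k approximation with range and co-range in the column space of AQ. -/

import Mathlib

open Matrix BigOperators

/-- `M = U * diagonal μ * Uᵀ` is a spectral (eigen)decomposition of the symmetric matrix `M`,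
with orthogonal `U` and eigenvalues `μ` listed in nonincreasing order. -/
def IsSpectralDecomp {n : ℕ} (M U : Matrix (Fin n) (Fin n) ℝ) (μ : Fin n → ℝ) : Prop :=
  Uᵀ * U = 1 ∧ Antitone μ ∧ M = U * Matrix.diagonal μ * Uᵀ

/-- Truncation of a spectral decomposition to its `k` largest (first `k`) eigenvalues:
the best rank-`k` approximation `M_(k)` associated with the decomposition `(U, μ)`. -/
noncomputable def trunc {n : ℕ} (k : ℕ) (U : Matrix (Fin n) (Fin n) ℝ) (μ : Fin n → ℝ) :
    Matrix (Fin n) (Fin n) ℝ :=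
  U * Matrix.diagonal (fun i : Fin n => if (i : ℕ) < k then μ i else 0) * Uᵀ

/-- `f` is operator monotone on SPSD matrices: for all `m` and all `m × m` SPSD matrices
`B ⪰ C ⪰ 0`, one has `f(B) ⪰ f(C)`, where matrix functions are computed through (any)
spectral decomposition. -/
def OperatorMonotone (f : ℝ → ℝ) : Prop :=
  ∀ (m : ℕ) (B C U V : Matrix (Fin m) (Fin m) ℝ) (β γ : Fin m → ℝ),
    IsSpectralDecomp B U β → IsSpectralDecomp C V γ →
    B.PosSemidef → C.PosSemidef → (B - C).PosSemidef →
    (U * Matrix.diagonal (f ∘ β) * Uᵀ - V * Matrix.diagonal (f ∘ γ) * Vᵀ).PosSemidef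

/-- Squared Frobenius norm `‖M‖_F² = Σ_{i,j} M_{ij}²`. -/
noncomputable def frobSq {m l : ℕ} (M : Matrix (Fin m) (Fin l) ℝ) : ℝ :=
  ∑ i, ∑ j, (M i j) ^ 2

/-- Frobenius norm. -/
noncomputable def frobNorm {m l : ℕ} (M : Matrix (Fin m) (Fin l) ℝ) : ℝ :=
  Real.sqrt (frobSq M)

/-- The eigenvalues of a Hermitian matrix listed in nonincreasing order:
`eigsDesc hM i` is the `(i+1)`-st largest eigenvalue of `M`. -/
noncomputable def eigsDesc {m : ℕ} {M : Matrix (Fin m) (Fin m) ℝ} (hM : M.IsHermitian) :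
    Fin m → ℝ :=
  fun i => (hM.eigenvalues ∘ Tuple.sort hM.eigenvalues) i.rev

/-- The singular values of `M` in nonincreasing order: `svDesc M i` is the `(i+1)`-st largest
singular value of `M`, i.e. the square root of the `(i+1)`-st largest eigenvalue of `MᴴM`. -/
noncomputable def svDesc {m l : ℕ} (M : Matrix (Fin m) (Fin l) ℝ) : Fin l → ℝ :=
  fun i => Real.sqrt (eigsDesc (Matrix.isHermitian_conjTranspose_mul_self M) i)

/-- Nuclear norm: the sum of the singular values. -/
noncomputable def nuclearNorm {m l : ℕ} (M : Matrix (Fin m) (Fin l) ℝ) : ℝ :=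
  ∑ i, svDesc M i

/-- Operator (spectral) norm: the largest singular value. -/
noncomputable def opNorm {m l : ℕ} (M : Matrix (Fin m) (Fin l) ℝ) : ℝ :=
  ⨆ i, svDesc M i

/-- `p`-th power of the Schatten `p`-norm: `‖M‖_(p)^p = Σᵢ σᵢ(M)^p`. -/
noncomputable def schattenPow {m l : ℕ} (p : ℝ) (M : Matrix (Fin m) (Fin l) ℝ) : ℝ :=
  ∑ i, svDesc M i ^ p

/-- Schatten `p`-norm: `‖M‖_(p) = (Σᵢ σᵢ(M)^p)^(1/p)`. -/
noncomputable def schattenNorm {m l : ℕ} (p : ℝ) (M : Matrix (Fin m) (Fin l) ℝ) : ℝ :=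
  (schattenPow p M) ^ (1 / p)

/-- `P` is the orthogonal projection onto the column space of `M`. -/
def IsOrthProjOnto {m l : ℕ} (P : Matrix (Fin m) (Fin m) ℝ) (M : Matrix (Fin m) (Fin l) ℝ) :
    Prop :=
  Pᵀ = P ∧ P * P = P ∧ P * M = M ∧ ∃ Y : Matrix (Fin l) (Fin m) ℝ, P = M * Y


/-!
Write `A = BᵀB`, let `P` be the orthogonal projection onto the column space of `W = QC₂` and
`R` the one onto the column space of `BW`, and take `C₁ = C₂ X C₂ᵀ` (of rank at most that of
`C₂`) with `BW X (BW)ᵀ = R`, so that `A − AQC₁QᵀA = Bᵀ(1 − R)B`. Since `BP` has its columns in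
the range of `BW`, `(1 − R)B` equals `(1 − R)Y` with `Y = B(1 − P)`, hence
`0 ⪯ Bᵀ(1 − R)B ⪯ YᵀY = (1 − P)A(1 − P)`. The Frobenius norm is monotone on the Loewner order
of SPSD matrices, and compressing by the projection `1 − P` (which kills `QC₂`) does not
increase it, so `‖A − AQC₁QᵀA‖_F ≤ ‖(1 − P)(A − QC₂)(1 − P)‖_F ≤ ‖A − QC₂‖_F`.
-/

open scoped MatrixOrder

section GeneralizedInverse

variable {𝕜 : Type*} [RCLike 𝕜] {ι : Type*} [Fintype ι] [DecidableEq ι]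

/-- The functional calculus applied to `x ↦ x⁻¹` (with `0⁻¹ = 0`) gives a generalized inverse;
continuity is automatic since the spectrum is finite. -/
lemma IsSelfAdjoint.exists_isSelfAdjoint_mul_mul_eq_self {N : Matrix ι ι 𝕜}
    (hN : IsSelfAdjoint N) : ∃ p : Matrix ι ι 𝕜, IsSelfAdjoint p ∧ N * p * N = N := by
  have hfin : (spectrum ℝ N).Finite := N.finite_real_spectrum
  refine ⟨cfc (·⁻¹ : ℝ → ℝ) N, cfc_predicate _ _, ?_⟩
  calc N * cfc (·⁻¹ : ℝ → ℝ) N * N = cfc (fun x : ℝ => x * x⁻¹ * x) N := by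
        rw [cfc_mul (fun x : ℝ => x * x⁻¹) (fun x => x) N (hfin.continuousOn _)
            (hfin.continuousOn _),
          cfc_mul (fun x => x) (·⁻¹) N (hfin.continuousOn _) (hfin.continuousOn _), cfc_id' ℝ N]
    _ = cfc (fun x => x) N := cfc_congr fun x _ => by
        by_cases hx : x = 0 <;> simp [hx]
    _ = N := cfc_id' ℝ N

end GeneralizedInverse

section RealMatrix

variable {a b c : ℕ}

lemma exists_isOrthProjOnto_mul_mul_transpose (M : Matrix (Fin a) (Fin b) ℝ) :
    ∃ X : Matrix (Fin b) (Fin b) ℝ, IsOrthProjOnto (M * X * Mᵀ) M := by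
  have hgram : IsSelfAdjoint (Mᵀ * M) :=
    conjTranspose_eq_transpose_of_trivial M ▸ isHermitian_conjTranspose_mul_self M
  obtain ⟨p, hp, hpN⟩ := hgram.exists_isSelfAdjoint_mul_mul_eq_self
  have hpT : pᵀ = p := by rwa [← conjTranspose_eq_transpose_of_trivial]
  have hfix : M * p * Mᵀ * M = M := by
    have h : (Mᴴ * M) * (p * (Mᵀ * M) - 1) = 0 := by
      rw [conjTranspose_eq_transpose_of_trivial, Matrix.mul_sub, ← Matrix.mul_assoc, hpN,
        Matrix.mul_one, sub_self]
    rw [conjTranspose_mul_self_mul_eq_zero, Matrix.mul_sub, Matrix.mul_one, sub_eq_zero] at h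
    simpa only [Matrix.mul_assoc] using h
  refine ⟨p, ?_, ?_, hfix, p * Mᵀ, by simp only [Matrix.mul_assoc]⟩
  · simp only [transpose_mul, transpose_transpose, hpT, Matrix.mul_assoc]
  · rw [← Matrix.mul_assoc (M * p * Mᵀ) (M * p), ← Matrix.mul_assoc _ M p, hfix]

lemma IsOrthProjOnto.isStarProjection {P : Matrix (Fin a) (Fin a) ℝ}
    {M : Matrix (Fin a) (Fin b) ℝ} (hP : IsOrthProjOnto P M) : IsStarProjection P :=
  ⟨hP.2.1, by rw [IsSelfAdjoint, star_eq_conjTranspose, conjTranspose_eq_transpose_of_trivial,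
    hP.1]⟩

lemma frobSq_eq_trace (M : Matrix (Fin a) (Fin b) ℝ) : frobSq M = (Mᵀ * M).trace := by
  rw [frobSq, Matrix.trace]
  simp only [diag_apply, mul_apply, transpose_apply, sq]
  exact Finset.sum_comm

lemma frobSq_nonneg (M : Matrix (Fin a) (Fin b) ℝ) : 0 ≤ frobSq M := by
  unfold frobSq
  positivity

lemma frobSq_transpose (M : Matrix (Fin a) (Fin b) ℝ) : frobSq Mᵀ = frobSq M :=
  Finset.sum_comm

lemma posSemidef_transpose_mul_self (M : Matrix (Fin a) (Fin b) ℝ) : (Mᵀ * M).PosSemidef := by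
  simpa [conjTranspose_eq_transpose_of_trivial] using posSemidef_conjTranspose_mul_self M

namespace IsStarProjection

variable {P : Matrix (Fin a) (Fin a) ℝ} (hP : IsStarProjection P)
include hP

lemma transpose_eq : Pᵀ = P :=
  (isHermitian_iff_isSymm.mp hP.isSelfAdjoint).eq

lemma transpose_mul_mul (Y : Matrix (Fin a) (Fin b) ℝ) :
    (P * Y)ᵀ * (P * Y) = Yᵀ * P * Y := by
  rw [transpose_mul, hP.transpose_eq, Matrix.mul_assoc, ← Matrix.mul_assoc P P,
    hP.isIdempotentElem.eq, Matrix.mul_assoc]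

lemma gram_add_gram_one_sub (Y : Matrix (Fin a) (Fin b) ℝ) :
    (P * Y)ᵀ * (P * Y) + ((1 - P) * Y)ᵀ * ((1 - P) * Y) = Yᵀ * Y := by
  rw [hP.transpose_mul_mul, hP.one_sub.transpose_mul_mul, Matrix.mul_sub, Matrix.sub_mul,
    Matrix.mul_one, add_sub_cancel]

lemma frobSq_mul_le (Y : Matrix (Fin a) (Fin b) ℝ) : frobSq (P * Y) ≤ frobSq Y := by
  have h := congrArg trace (hP.gram_add_gram_one_sub Y)
  rw [trace_add, ← frobSq_eq_trace, ← frobSq_eq_trace, ← frobSq_eq_trace] at h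
  linarith [frobSq_nonneg ((1 - P) * Y)]

lemma frobNorm_mul_mul_le (Y : Matrix (Fin a) (Fin a) ℝ) : frobNorm (P * Y * P) ≤ frobNorm Y := by
  refine Real.sqrt_le_sqrt ?_
  calc frobSq (P * Y * P) = frobSq (P * (P * Y)ᵀ) := by
        rw [← frobSq_transpose, transpose_mul, transpose_mul, hP.transpose_eq]
    _ ≤ frobSq (P * Y)ᵀ := hP.frobSq_mul_le _
    _ ≤ frobSq Y := frobSq_transpose (P * Y) ▸ hP.frobSq_mul_le Y

end IsStarProjection

lemma trace_mul_nonneg_of_posSemidef {ι : Type*} [Fintype ι] [DecidableEq ι] {L K : Matrix ι ι ℝ}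
    (hL : L.PosSemidef) (hK : K.PosSemidef) : 0 ≤ (L * K).trace := by
  obtain ⟨B, rfl⟩ := CStarAlgebra.nonneg_iff_eq_star_mul_self.mp hL.nonneg
  rw [Matrix.mul_assoc, trace_mul_comm]
  exact (hK.mul_mul_conjTranspose_same B).trace_nonneg

lemma frobNorm_le_frobNorm_of_posSemidef {L K : Matrix (Fin a) (Fin a) ℝ} (hL : L.PosSemidef)
    (hKL : (K - L).PosSemidef) : frobNorm L ≤ frobNorm K := by
  have hK : K.PosSemidef := by simpa using hKL.add hL
  refine Real.sqrt_le_sqrt ?_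
  rw [frobSq_eq_trace, frobSq_eq_trace, (isHermitian_iff_isSymm.mp hL.isHermitian).eq,
    (isHermitian_iff_isSymm.mp hK.isHermitian).eq]
  -- `K² − L² = (K − L)K + L(K − L)`, a sum of products of SPSD matrices
  have h₁ := trace_mul_nonneg_of_posSemidef hKL hK
  have h₂ := trace_mul_nonneg_of_posSemidef hL hKL
  rw [Matrix.sub_mul, trace_sub] at h₁
  rw [Matrix.mul_sub, trace_sub] at h₂
  linarith

lemma frobNorm_one_sub_mul_mul_one_sub_le {P B W : Matrix (Fin a) (Fin a) ℝ}
    (hP : IsStarProjection P) (hPW : P * W = W) :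
    frobNorm ((1 - P) * B * (1 - P)) ≤ frobNorm (B - W) := by
  have hW : (1 - P) * W = 0 := by rw [Matrix.sub_mul, Matrix.one_mul, hPW, sub_self]
  calc frobNorm ((1 - P) * B * (1 - P)) = frobNorm ((1 - P) * (B - W) * (1 - P)) := by
        rw [Matrix.mul_sub (1 - P), hW, sub_zero]
    _ ≤ frobNorm (B - W) := hP.one_sub.frobNorm_mul_mul_le _

lemma frobNorm_gram_sub_le_of_isOrthProjOnto {B : Matrix (Fin a) (Fin b) ℝ}
    {W : Matrix (Fin b) (Fin c) ℝ} {P : Matrix (Fin b) (Fin b) ℝ} {R : Matrix (Fin a) (Fin a) ℝ}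
    (hP : IsOrthProjOnto P W) (hR : IsOrthProjOnto R (B * W)) :
    frobNorm (Bᵀ * B - Bᵀ * R * B) ≤ frobNorm ((1 - P) * (Bᵀ * B) * (1 - P)) := by
  have hP' := hP.isStarProjection
  have hR' := hR.isStarProjection
  obtain ⟨-, -, -, Z, hPZ⟩ := hP
  obtain ⟨-, -, hRBW, -⟩ := hR
  set Y := B * (1 - P) with hY
  have hres : (1 - R) * B = (1 - R) * Y := by
    have h : (1 - R) * B * P = 0 := by
      rw [hPZ, ← Matrix.mul_assoc, Matrix.mul_assoc (1 - R), Matrix.sub_mul, Matrix.one_mul,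
        hRBW, sub_self, Matrix.zero_mul]
    rw [hY, Matrix.mul_sub, Matrix.mul_one, Matrix.mul_sub, ← Matrix.mul_assoc, h, sub_zero]
  have hL : Bᵀ * B - Bᵀ * R * B = ((1 - R) * Y)ᵀ * ((1 - R) * Y) := by
    rw [← hres, hR'.one_sub.transpose_mul_mul, Matrix.mul_sub, Matrix.sub_mul, Matrix.mul_one]
  have hK : (1 - P) * (Bᵀ * B) * (1 - P) = Yᵀ * Y := by
    rw [hY, transpose_mul, hP'.one_sub.transpose_eq]
    simp only [Matrix.mul_assoc]
  rw [hL, hK, ← hR'.gram_add_gram_one_sub Y]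
  exact frobNorm_le_frobNorm_of_posSemidef (posSemidef_transpose_mul_self _)
    (by rw [add_sub_cancel_right]; exact posSemidef_transpose_mul_self _)

end RealMatrix

theorem one_sided_to_two_sided_general
    (n l k : ℕ)
    (A : Matrix (Fin n) (Fin n) ℝ) (hA : A.PosSemidef)
    (Q : Matrix (Fin n) (Fin l) ℝ) :
    ∀ C₂ : Matrix (Fin l) (Fin n) ℝ, C₂.rank ≤ k →
      ∃ C₁ : Matrix (Fin l) (Fin l) ℝ, C₁.rank ≤ k ∧
        frobNorm (A - A * Q * C₁ * Qᵀ * A) ≤ frobNorm (A - Q * C₂) := by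
  intro C₂ hC₂
  obtain ⟨B, rfl⟩ : ∃ B : Matrix (Fin n) (Fin n) ℝ, A = Bᵀ * B := by
    simpa [star_eq_conjTranspose, conjTranspose_eq_transpose_of_trivial] using
      CStarAlgebra.nonneg_iff_eq_star_mul_self.mp hA.nonneg
  set W := Q * C₂
  obtain ⟨Z, hP⟩ := exists_isOrthProjOnto_mul_mul_transpose W
  obtain ⟨X, hR⟩ := exists_isOrthProjOnto_mul_mul_transpose (B * W)
  refine ⟨C₂ * X * C₂ᵀ, ((rank_mul_le_left _ _).trans (rank_mul_le_left _ _)).trans hC₂, ?_⟩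
  have hC₁ : Bᵀ * B * Q * (C₂ * X * C₂ᵀ) * Qᵀ * (Bᵀ * B)
      = Bᵀ * (B * W * X * (B * W)ᵀ) * B := by
    simp only [W, transpose_mul, Matrix.mul_assoc]
  rw [hC₁]
  exact (frobNorm_gram_sub_le_of_isOrthProjOnto hP hR).trans
    (frobNorm_one_sub_mul_mul_one_sub_le hP.isStarProjection hP.2.2.1)

/-- A one-sided rank-`k` projection guarantee onto the column space of `Q`
implies the same guarantee for the best two-sided rank-`k` approximation with range and
co-range in the column space of `AQ`: for SPSD `A`, the minimum of `‖A − AQCQᵀA‖_F` over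
rank-`≤k` matrices `C ∈ ℝ^{ℓ×ℓ}` is at most the minimum of `‖A − QC‖_F` over rank-`≤k`
matrices `C ∈ ℝ^{ℓ×n}`. -/
theorem one_sided_to_two_sided
    (n l k : ℕ) (hk : 1 ≤ k) (hkn : k < n)
    (A : Matrix (Fin n) (Fin n) ℝ) (hA : A.PosSemidef)
    (Q : Matrix (Fin n) (Fin l) ℝ) :
    ∀ C₂ : Matrix (Fin l) (Fin n) ℝ, C₂.rank ≤ k →
      ∃ C₁ : Matrix (Fin l) (Fin l) ℝ, C₁.rank ≤ k ∧
        frobNorm (A - A * Q * C₁ * Qᵀ * A) ≤ frobNorm (A - Q * C₂) :=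
  one_sided_to_two_sided_general n l k A hA Q
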